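/- Let m ≥ 3 be an integer and define p : ℝ^{2m} → ℝ by p(x) := -(1 + x₁²)(x₂² + ⋯ + x_{2m}²). There is no solution u of (1)-(2) with constant Q = -(2m-1)! such that u is bounded from above and u - v = p, where v is defined from u as below. -/

import Mathlib

open MeasureTheory Real Filter Topology

/-- The Euclidean Laplacian (sum of second partial derivatives) on `ℝ^n`. -/
noncomputable def lap {n : ℕ} (f : EuclideanSpace ℝ (Fin n) → ℝ) :
    EuclideanSpace ℝ (Fin n) → ℝ := fun x =>
  ∑ i : Fin n, iteratedFDeriv ℝ 2 f x ![EuclideanSpace.single i 1, EuclideanSpace.single i 1]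

/-- `p` is the evaluation of a real polynomial in `n` variables of total degree at most `d`. -/
def IsPolyOfDegLE {n : ℕ} (p : EuclideanSpace ℝ (Fin n) → ℝ) (d : ℕ) : Prop :=
  ∃ P : MvPolynomial (Fin n) ℝ, P.totalDegree ≤ d ∧
    ∀ x, p x = MvPolynomial.eval (fun i => x i) P

/-- The `k`-dimensional volume of the unit sphere `S^k ⊆ ℝ^{k+1}`,
computed as `(k+1)` times the volume of the unit ball in `ℝ^{k+1}`. -/
noncomputable def sphereVol (k : ℕ) : ℝ :=
  ((k + 1 : ℕ) : ℝ) * (volume (Metric.ball (0 : EuclideanSpace ℝ (Fin (k + 1))) 1)).toReal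

/-- The constant `γ_m = |S^{2m-1}| 2^{2m-2} ((m-1)!)²`. -/
noncomputable def gammaConst (m : ℕ) : ℝ :=
  sphereVol (2 * m - 1) * 2 ^ (2 * m - 2) * ((m - 1).factorial : ℝ) ^ 2

/-- `u` is a solution of `(-Δ)^m u = Q e^{2mu}` on `ℝ^{2m}` with `∫ e^{2mu} < ∞`. -/
def IsSolution (m : ℕ) (Q : ℝ) (u : EuclideanSpace ℝ (Fin (2 * m)) → ℝ) : Prop :=
  ContDiff ℝ (⊤ : ℕ∞) u ∧
  (∀ x, (-1 : ℝ) ^ m * (lap^[m] u) x = Q * Real.exp (2 * (m : ℝ) * u x)) ∧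
  Integrable (fun x => Real.exp (2 * (m : ℝ) * u x))

/-- `α = |S^{2m}|⁻¹ ∫_{ℝ^{2m}} e^{2mu}`. -/
noncomputable def solAlpha (m : ℕ) (u : EuclideanSpace ℝ (Fin (2 * m)) → ℝ) : ℝ :=
  (1 / sphereVol (2 * m)) * ∫ x, Real.exp (2 * (m : ℝ) * u x)

/-- The auxiliary function `v(x) = -((2m-1)!/γ_m) ∫ log(|y|/|x-y|) e^{2mu(y)} dy`. -/
noncomputable def vAux (m : ℕ) (u : EuclideanSpace ℝ (Fin (2 * m)) → ℝ) :
    EuclideanSpace ℝ (Fin (2 * m)) → ℝ := fun x =>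
  -(((2 * m - 1).factorial : ℝ) / gammaConst m) *
    ∫ y, Real.log (‖y‖ / ‖x - y‖) * Real.exp (2 * (m : ℝ) * u y)

section AuxLemmas

open Metric Set

variable {n : ℕ}
local notation "E" => EuclideanSpace ℝ (Fin n)

lemma invK (hn : 2 ≤ n) :
    IntegrableOn (fun w : EuclideanSpace ℝ (Fin n) => ‖w‖⁻¹) (Metric.ball 0 1) volume := by
  have hmeas : Measurable (fun w : E => ‖w‖⁻¹) := measurable_norm.inv
  set V := volume (Metric.ball (0:E) 1) with hV
  have hVfin : V < ⊤ := measure_ball_lt_top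
  constructor
  · exact hmeas.aestronglyMeasurable.restrict
  · rw [hasFiniteIntegral_iff_ofReal (Eventually.of_forall fun w => by positivity)]
    have key : (∫⁻ w in Metric.ball (0:E) 1, ENNReal.ofReal (‖w‖⁻¹)) =
        ∫⁻ t in Set.Ioi (0:ℝ),
          (volume.restrict (Metric.ball (0:E) 1)) {a | t ≤ ‖a‖⁻¹} :=
      lintegral_eq_lintegral_meas_le _ (Eventually.of_forall fun w => by positivity)
        hmeas.aemeasurable
    rw [key]
    have hsplit : (∫⁻ t in Set.Ioi (0:ℝ),
          (volume.restrict (Metric.ball (0:E) 1)) {a | t ≤ ‖a‖⁻¹})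
        ≤ (∫⁻ t in Set.Ioc (0:ℝ) 1,
          (volume.restrict (Metric.ball (0:E) 1)) {a | t ≤ ‖a‖⁻¹})
        + ∫⁻ t in Set.Ioi (1:ℝ),
          (volume.restrict (Metric.ball (0:E) 1)) {a | t ≤ ‖a‖⁻¹} := by
      calc _ ≤ ∫⁻ t in Set.Ioc (0:ℝ) 1 ∪ Set.Ioi 1,
          (volume.restrict (Metric.ball (0:E) 1)) {a | t ≤ ‖a‖⁻¹} :=
            lintegral_mono_set Ioi_subset_Ioc_union_Ioi
        _ ≤ _ := lintegral_union_le _ _ _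
    refine lt_of_le_of_lt hsplit (ENNReal.add_lt_top.2 ⟨?_, ?_⟩)
    · calc (∫⁻ t in Set.Ioc (0:ℝ) 1,
          (volume.restrict (Metric.ball (0:E) 1)) {a | t ≤ ‖a‖⁻¹})
          ≤ ∫⁻ _ in Set.Ioc (0:ℝ) 1, V := by
            refine lintegral_mono fun t => ?_
            calc (volume.restrict (Metric.ball (0:E) 1)) {a | t ≤ ‖a‖⁻¹}
                ≤ (volume.restrict (Metric.ball (0:E) 1)) Set.univ := measure_mono (subset_univ _)
              _ ≤ V := by
                  rw [Measure.restrict_apply_univ]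
        _ = V * volume (Set.Ioc (0:ℝ) 1) := by rw [setLIntegral_const, Real.volume_Ioc]
        _ < ⊤ := by
            apply ENNReal.mul_lt_top hVfin
            simp [ENNReal.ofReal_lt_top]
    · have hbound : ∀ t ∈ Set.Ioi (1:ℝ),
          (volume.restrict (Metric.ball (0:E) 1)) {a | t ≤ ‖a‖⁻¹}
            ≤ ENNReal.ofReal (t ^ (-(n:ℝ))) * V := by
        intro t ht
        have ht1 : (1:ℝ) < t := ht
        have ht0 : (0:ℝ) < t := lt_trans one_pos ht1
        have hsub : {a : E | t ≤ ‖a‖⁻¹} ⊆ Metric.closedBall 0 t⁻¹ := by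
          intro a ha
          have ha' : t ≤ ‖a‖⁻¹ := ha
          have hanorm : ‖a‖ ≤ t⁻¹ := by
            rcases eq_or_lt_of_le (norm_nonneg a) with h | h
            · rw [← h]; positivity
            · have : ‖a‖⁻¹ > 0 := by positivity
              rw [← inv_inv ‖a‖]
              exact inv_anti₀ ht0 ha'
          simpa [Metric.mem_closedBall, dist_zero_right] using hanorm
        calc (volume.restrict (Metric.ball (0:E) 1)) {a | t ≤ ‖a‖⁻¹}
            ≤ volume {a : E | t ≤ ‖a‖⁻¹} := Measure.restrict_le_self _
          _ ≤ volume (Metric.closedBall (0:E) t⁻¹) := measure_mono hsub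
          _ = ENNReal.ofReal (t⁻¹ ^ Module.finrank ℝ E) * V := by
              rw [Measure.addHaar_closedBall _ _ (by positivity)]
          _ = ENNReal.ofReal (t ^ (-(n:ℝ))) * V := by
              congr 2
              have hfr : Module.finrank ℝ (EuclideanSpace ℝ (Fin n)) = n :=
                finrank_euclideanSpace_fin
              rw [hfr, Real.rpow_neg ht0.le, Real.rpow_natCast, inv_pow]
      calc (∫⁻ t in Set.Ioi (1:ℝ),
            (volume.restrict (Metric.ball (0:E) 1)) {a | t ≤ ‖a‖⁻¹})
          ≤ ∫⁻ t in Set.Ioi (1:ℝ), ENNReal.ofReal (t ^ (-(n:ℝ))) * V :=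
            setLIntegral_mono_ae (by fun_prop) (Eventually.of_forall hbound)
        _ = (∫⁻ t in Set.Ioi (1:ℝ), ENNReal.ofReal (t ^ (-(n:ℝ)))) * V :=
            lintegral_mul_const' _ _ hVfin.ne
        _ < ⊤ := by
            apply ENNReal.mul_lt_top _ hVfin
            apply IntegrableOn.setLIntegral_lt_top
            apply integrableOn_Ioi_rpow_of_lt _ one_pos
            have : (2:ℝ) ≤ (n:ℝ) := by exact_mod_cast hn
            linarith

lemma mul_inv_integrable (hn : 2 ≤ n) {f : EuclideanSpace ℝ (Fin n) → ℝ} {M : ℝ}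
    (hfc : Continuous f) (hf0 : ∀ y, 0 ≤ f y) (hfM : ∀ y, f y ≤ M)
    (hfi : Integrable f) (z : EuclideanSpace ℝ (Fin n)) :
    Integrable (fun y : EuclideanSpace ℝ (Fin n) => f y * ‖z - y‖⁻¹) ∧
    (∫ y : EuclideanSpace ℝ (Fin n), f y * ‖z - y‖⁻¹) ≤
      (∫ y : EuclideanSpace ℝ (Fin n), f y) +
        M * ∫ w in Metric.ball (0:EuclideanSpace ℝ (Fin n)) 1, ‖w‖⁻¹ := by
  have hM0 : (0:ℝ) ≤ M := le_trans (hf0 0) (hfM 0)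
  set h : EuclideanSpace ℝ (Fin n) → ℝ :=
    (Metric.ball (0:EuclideanSpace ℝ (Fin n)) 1).indicator (fun w => M * ‖w‖⁻¹) with hh
  have h_int : Integrable h :=
    (MeasureTheory.IntegrableOn.integrable_indicator ((invK hn).const_mul M)
      measurableSet_ball)
  have h_nonneg : ∀ w, 0 ≤ h w := fun w =>
    Set.indicator_nonneg (fun w _ => by positivity) w
  have hcomp : Integrable (fun y : EuclideanSpace ℝ (Fin n) => h (z - y)) :=
    (MeasureTheory.integrable_comp_sub_left h z).2 h_int
  have hptwise : ∀ y, f y * ‖z - y‖⁻¹ ≤ f y + h (z - y) := by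
    intro y
    by_cases hzy : ‖z - y‖ < 1
    · have hmem : z - y ∈ Metric.ball (0:EuclideanSpace ℝ (Fin n)) 1 := by
        simpa [Metric.mem_ball, dist_zero_right] using hzy
      have : h (z - y) = M * ‖z - y‖⁻¹ := Set.indicator_of_mem hmem _
      rw [this]
      have : f y * ‖z - y‖⁻¹ ≤ M * ‖z - y‖⁻¹ :=
        mul_le_mul_of_nonneg_right (hfM y) (by positivity)
      linarith [hf0 y]
    · push_neg at hzy
      have hinv : ‖z - y‖⁻¹ ≤ 1 := by
        rcases eq_or_lt_of_le hzy with h' | h'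
        · rw [← h']; norm_num
        · exact le_of_lt (by rw [inv_lt_one_iff₀]; right; exact h')
      have : f y * ‖z - y‖⁻¹ ≤ f y * 1 := mul_le_mul_of_nonneg_left hinv (hf0 y)
      have h2 := h_nonneg (z - y)
      nlinarith
  have hmeasLHS : AEStronglyMeasurable (fun y : EuclideanSpace ℝ (Fin n) => f y * ‖z - y‖⁻¹)
      volume := by
    apply Continuous.aestronglyMeasurable ?_ |>.mul
      (((continuous_const.sub continuous_id).norm.measurable.inv).aestronglyMeasurable)
    · exact hfc
  have hRHSint : Integrable (fun y : EuclideanSpace ℝ (Fin n) => f y + h (z - y)) :=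
    hfi.add hcomp
  have hLHSint : Integrable (fun y : EuclideanSpace ℝ (Fin n) => f y * ‖z - y‖⁻¹) := by
    apply Integrable.mono' hRHSint hmeasLHS
    refine Eventually.of_forall fun y => ?_
    rw [Real.norm_eq_abs, abs_of_nonneg (mul_nonneg (hf0 y) (by positivity))]
    exact hptwise y
  refine ⟨hLHSint, ?_⟩
  calc (∫ y : EuclideanSpace ℝ (Fin n), f y * ‖z - y‖⁻¹)
      ≤ ∫ y : EuclideanSpace ℝ (Fin n), (f y + h (z - y)) :=
        integral_mono hLHSint hRHSint hptwise
    _ = (∫ y : EuclideanSpace ℝ (Fin n), f y) + ∫ y : EuclideanSpace ℝ (Fin n), h (z - y) :=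
        integral_add hfi hcomp
    _ = (∫ y : EuclideanSpace ℝ (Fin n), f y) +
        M * ∫ w in Metric.ball (0:EuclideanSpace ℝ (Fin n)) 1, ‖w‖⁻¹ := by
        rw [MeasureTheory.integral_sub_left_eq_self h volume z]
        congr 1
        rw [hh, MeasureTheory.integral_indicator measurableSet_ball,
          MeasureTheory.integral_const_mul]

set_option maxHeartbeats 1000000 in
lemma log_growth (hn : 2 ≤ n) {f : EuclideanSpace ℝ (Fin n) → ℝ} {M : ℝ}
    (hfc : Continuous f) (hf0 : ∀ y, 0 < f y) (hfM : ∀ y, f y ≤ M)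
    (hfi : Integrable f) (B : ℝ) :
    ∃ T : ℝ, ∀ x : EuclideanSpace ℝ (Fin n), T ≤ ‖x‖ →
      Integrable (fun y : EuclideanSpace ℝ (Fin n) => Real.log (‖x - y‖ / ‖y‖) * f y) ∧
      B < ∫ y : EuclideanSpace ℝ (Fin n), Real.log (‖x - y‖ / ‖y‖) * f y := by
  have hf0' : ∀ y, (0:ℝ) ≤ f y := fun y => (hf0 y).le
  obtain ⟨A, hA⟩ : ∃ A : ℝ, A = ∫ y : EuclideanSpace ℝ (Fin n), f y := ⟨_, rfl⟩
  haveI : Nontrivial (EuclideanSpace ℝ (Fin n)) := by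
    refine nontrivial_of_ne (EuclideanSpace.single (⟨0, by omega⟩ : Fin n) (1:ℝ)) 0 ?_
    intro h
    have := congrArg (fun v : EuclideanSpace ℝ (Fin n) => v (⟨0, by omega⟩ : Fin n)) h
    simp [EuclideanSpace.single_apply] at this
  have hApos : 0 < A := by
    rw [hA, integral_pos_iff_support_of_nonneg hf0' hfi]
    have hsupp : Function.support f = Set.univ := by
      ext y; simp [Function.support, (hf0 y).ne']
    rw [hsupp]
    exact isOpen_univ.measure_pos volume ⟨0, trivial⟩
  -- choose R
  have htend : Tendsto (fun k : ℕ => ∫ y in Metric.ball (0:E) k, f y) atTop (𝓝 A) := by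
    have h2 := MeasureTheory.tendsto_setIntegral_of_monotone
      (s := fun k : ℕ => Metric.ball (0:E) k)
      (fun k => measurableSet_ball)
      (fun i j hij => Metric.ball_subset_ball (by exact_mod_cast hij))
      (by rw [Metric.iUnion_ball_nat]; exact hfi.integrableOn)
    rw [Metric.iUnion_ball_nat, MeasureTheory.setIntegral_univ, ← hA] at h2
    exact h2
  have hev : ∀ᶠ k : ℕ in atTop, A - A/8 < ∫ y in Metric.ball (0:E) k, f y :=
    htend.eventually (eventually_gt_nhds (by linarith))
  obtain ⟨k, hk⟩ := hev.exists
  set R : ℝ := max (k : ℝ) 1 with hR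
  have hR1 : (1:ℝ) ≤ R := le_max_right _ _
  have hRpos : (0:ℝ) < R := lt_of_lt_of_le one_pos hR1
  have hinner : A - A/8 ≤ ∫ y in Metric.ball (0:E) R, f y := by
    refine le_trans hk.le (MeasureTheory.setIntegral_mono_set hfi.integrableOn ?_ ?_)
    · filter_upwards with y using hf0' y
    · exact (Metric.ball_subset_ball (le_max_left _ _)).eventuallyLE
  have houter : (∫ y in (Metric.ball (0:E) R)ᶜ, f y) ≤ A/8 := by
    have hsum := MeasureTheory.integral_add_compl (measurableSet_ball
      (x := (0:E)) (ε := R)) hfi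
    rw [← hA] at hsum
    linarith [hinner, hsum]
  have houter0 : (0:ℝ) ≤ ∫ y in (Metric.ball (0:E) R)ᶜ, f y :=
    setIntegral_nonneg measurableSet_ball.compl (fun y _ => hf0' y)
  obtain ⟨K, hK⟩ : ∃ K : ℝ, K = ∫ w in Metric.ball (0:E) 1, ‖w‖⁻¹ := ⟨_, rfl⟩
  set I₀ := A + M * K with hI₀
  set Cst := (7*A/8) * Real.log (2*R) + (A/8) * Real.log 2 + I₀ with hCst
  refine ⟨max (2*R) (max 1 (Real.exp ((B + Cst + 1)/(3*A/4)))), fun x hx => ?_⟩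
  set t := ‖x‖ with ht
  have ht2R : 2*R ≤ t := le_trans (le_max_left _ _) hx
  have ht1 : (1:ℝ) ≤ t := le_trans (le_trans (le_max_left _ _) (le_max_right _ _)) hx
  have ht0 : (0:ℝ) < t := lt_of_lt_of_le one_pos ht1
  have htexp : Real.exp ((B + Cst + 1)/(3*A/4)) ≤ t :=
    le_trans (le_trans (le_max_right _ _) (le_max_right _ _)) hx
  have hlogt : (B + Cst + 1)/(3*A/4) ≤ Real.log t := by
    have := Real.log_le_log (Real.exp_pos _) htexp
    rwa [Real.log_exp] at this
  -- ae facts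
  have hae0 : ∀ᵐ y : E, y ≠ 0 := by
    rw [ae_iff]
    have : {y : E | ¬ y ≠ 0} = {0} := by ext y; simp
    rw [this]; exact measure_singleton 0
  have haex : ∀ᵐ y : E, y ≠ x := by
    rw [ae_iff]
    have : {y : E | ¬ y ≠ x} = {x} := by ext y; simp
    rw [this]; exact measure_singleton x
  -- integrable majorants
  obtain ⟨hI1, hI1b⟩ := mul_inv_integrable hn hfc hf0' hfM hfi (0:E)
  obtain ⟨hI2, hI2b⟩ := mul_inv_integrable hn hfc hf0' hfM hfi x
  -- measurability of gf
  have hgfm : AEStronglyMeasurable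
      (fun y : E => Real.log (‖x - y‖ / ‖y‖) * f y) volume := by
    apply Measurable.aestronglyMeasurable
    exact (Real.measurable_log.comp
      (((continuous_const.sub continuous_id).norm.measurable).div
        continuous_norm.measurable)).mul hfc.measurable
  -- pointwise abs bound
  have habs : ∀ᵐ y : E, ‖Real.log (‖x - y‖ / ‖y‖) * f y‖ ≤
      t * (f y * ‖(0:E) - y‖⁻¹) + t * (f y * ‖x - y‖⁻¹) := by
    filter_upwards [hae0, haex] with y hy0 hyx
    have ha : (0:ℝ) < ‖x - y‖ := by
      rw [norm_pos_iff]; intro h; apply hyx; rw [sub_eq_zero] at h; exact h.symm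
    have hb : (0:ℝ) < ‖y‖ := norm_pos_iff.2 hy0
    have habdiff : |‖x - y‖ - ‖y‖| ≤ t := by
      have := abs_norm_sub_norm_le (x - y) (-y)
      simpa [sub_neg_eq_add, sub_add_cancel] using this
    have hlog : |Real.log (‖x - y‖ / ‖y‖)| ≤ t * (‖y‖⁻¹ + ‖x - y‖⁻¹) := by
      rw [Real.log_div ha.ne' hb.ne', abs_sub_le_iff]
      constructor
      · calc Real.log ‖x - y‖ - Real.log ‖y‖ = Real.log (‖x - y‖ / ‖y‖) :=
              (Real.log_div ha.ne' hb.ne').symm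
          _ ≤ ‖x - y‖ / ‖y‖ - 1 := Real.log_le_sub_one_of_pos (by positivity)
          _ = (‖x - y‖ - ‖y‖) / ‖y‖ := by field_simp
          _ ≤ t * ‖y‖⁻¹ := by
              rw [div_eq_mul_inv]
              apply mul_le_mul_of_nonneg_right _ (by positivity)
              calc ‖x - y‖ - ‖y‖ ≤ |‖x - y‖ - ‖y‖| := le_abs_self _
                _ ≤ t := habdiff
          _ ≤ t * (‖y‖⁻¹ + ‖x - y‖⁻¹) := by nlinarith [inv_pos.2 ha, inv_pos.2 hb, ht0]
      · calc Real.log ‖y‖ - Real.log ‖x - y‖ = Real.log (‖y‖ / ‖x - y‖) :=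
              (Real.log_div hb.ne' ha.ne').symm
          _ ≤ ‖y‖ / ‖x - y‖ - 1 := Real.log_le_sub_one_of_pos (by positivity)
          _ = (‖y‖ - ‖x - y‖) / ‖x - y‖ := by field_simp
          _ ≤ t * ‖x - y‖⁻¹ := by
              rw [div_eq_mul_inv]
              apply mul_le_mul_of_nonneg_right _ (by positivity)
              calc ‖y‖ - ‖x - y‖ ≤ |‖x - y‖ - ‖y‖| := by
                    rw [abs_sub_comm]; exact le_abs_self _
                _ ≤ t := habdiff
          _ ≤ t * (‖y‖⁻¹ + ‖x - y‖⁻¹) := by nlinarith [inv_pos.2 ha, inv_pos.2 hb, ht0]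
    calc ‖Real.log (‖x - y‖ / ‖y‖) * f y‖ = |Real.log (‖x - y‖ / ‖y‖)| * f y := by
          rw [norm_mul, Real.norm_eq_abs, Real.norm_eq_abs, abs_of_nonneg (hf0' y)]
      _ ≤ (t * (‖y‖⁻¹ + ‖x - y‖⁻¹)) * f y :=
          mul_le_mul_of_nonneg_right hlog (hf0' y)
      _ = t * (f y * ‖(0:E) - y‖⁻¹) + t * (f y * ‖x - y‖⁻¹) := by
          rw [zero_sub, norm_neg]; ring
  have hGF : Integrable (fun y : E => Real.log (‖x - y‖ / ‖y‖) * f y) := by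
    apply Integrable.mono' ((hI1.const_mul t).add (hI2.const_mul t)) hgfm habs
  refine ⟨hGF, ?_⟩
  have hsplit : (∫ y : E, Real.log (‖x - y‖ / ‖y‖) * f y) =
      (∫ y in Metric.ball (0:E) R, Real.log (‖x - y‖ / ‖y‖) * f y) +
        ∫ y in (Metric.ball (0:E) R)ᶜ, Real.log (‖x - y‖ / ‖y‖) * f y :=
    (MeasureTheory.integral_add_compl measurableSet_ball hGF).symm
  -- inner estimate
  have hinner_ae : ∀ᵐ y ∂(volume.restrict (Metric.ball (0:E) R)),
      (Real.log t - Real.log (2*R)) * f y ≤ Real.log (‖x - y‖ / ‖y‖) * f y := by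
    filter_upwards [ae_restrict_mem measurableSet_ball, ae_restrict_of_ae hae0]
      with y hyS hy0
    have hb : (0:ℝ) < ‖y‖ := norm_pos_iff.2 hy0
    have hbR : ‖y‖ < R := by simpa [dist_zero_right] using (mem_ball.1 hyS)
    have ha : t/2 ≤ ‖x - y‖ := by
      have h1 : ‖x‖ - ‖y‖ ≤ ‖x - y‖ := norm_sub_norm_le x y
      have : R ≤ t/2 := by linarith
      linarith [ht0]
    have ha0 : (0:ℝ) < ‖x - y‖ := lt_of_lt_of_le (by positivity) ha
    apply mul_le_mul_of_nonneg_right _ (hf0' y)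
    rw [Real.log_div ha0.ne' hb.ne']
    have h1 : Real.log (t/2) ≤ Real.log ‖x - y‖ := Real.log_le_log (by positivity) ha
    have h2 : Real.log ‖y‖ ≤ Real.log R := Real.log_le_log hb hbR.le
    have h3 : Real.log (2*R) = Real.log 2 + Real.log R :=
      Real.log_mul two_ne_zero hRpos.ne'
    have h4 : Real.log (t/2) = Real.log t - Real.log 2 :=
      Real.log_div ht0.ne' two_ne_zero
    linarith
  have hIS : (Real.log t - Real.log (2*R)) * (A - A/8) ≤
      ∫ y in Metric.ball (0:E) R, Real.log (‖x - y‖ / ‖y‖) * f y := by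
    have hcoeff : 0 ≤ Real.log t - Real.log (2*R) := by
      have : Real.log (2*R) ≤ Real.log t := Real.log_le_log (by positivity) ht2R
      linarith
    calc (Real.log t - Real.log (2*R)) * (A - A/8)
        ≤ (Real.log t - Real.log (2*R)) * ∫ y in Metric.ball (0:E) R, f y :=
          mul_le_mul_of_nonneg_left hinner hcoeff
      _ = ∫ y in Metric.ball (0:E) R, (Real.log t - Real.log (2*R)) * f y :=
          (MeasureTheory.integral_const_mul _ _).symm
      _ ≤ _ := MeasureTheory.setIntegral_mono_ae_restrict
          ((hfi.const_mul _).integrableOn) hGF.integrableOn hinner_ae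
  -- outer estimate
  have houter_ae : ∀ᵐ y ∂(volume.restrict (Metric.ball (0:E) R)ᶜ),
      -(Real.log (1+t) * f y + f y * ‖x - y‖⁻¹) ≤ Real.log (‖x - y‖ / ‖y‖) * f y := by
    filter_upwards [ae_restrict_of_ae hae0, ae_restrict_of_ae haex] with y hy0 hyx
    have hb : (0:ℝ) < ‖y‖ := norm_pos_iff.2 hy0
    have ha0 : (0:ℝ) < ‖x - y‖ := by
      rw [norm_pos_iff]; intro h; apply hyx; rw [sub_eq_zero] at h; exact h.symm
    have hbat : ‖y‖ ≤ ‖x - y‖ + t := by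
      calc ‖y‖ = ‖(y - x) + x‖ := by rw [sub_add_cancel]
        _ ≤ ‖y - x‖ + ‖x‖ := norm_add_le _ _
        _ = ‖x - y‖ + t := by rw [norm_sub_rev]
    have key : -(Real.log (1+t) + ‖x - y‖⁻¹) ≤ Real.log (‖x - y‖ / ‖y‖) := by
      have h1 : ‖x - y‖/(‖x - y‖ + t) ≤ ‖x - y‖/‖y‖ := by
        apply div_le_div_of_nonneg_left ha0.le hb
        · exact hbat
      have h1' : Real.log (‖x - y‖/(‖x - y‖ + t)) ≤ Real.log (‖x - y‖/‖y‖) :=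
        Real.log_le_log (by positivity) h1
      have h2 : Real.log (‖x - y‖/(‖x - y‖ + t)) = -Real.log ((‖x - y‖ + t)/‖x - y‖) := by
        rw [← Real.log_inv, inv_div]
      have h3 : (‖x - y‖ + t)/‖x - y‖ = 1 + t/‖x - y‖ := by field_simp
      have h4 : Real.log (1 + t/‖x - y‖) ≤ Real.log (1+t) + ‖x - y‖⁻¹ := by
        have hle : 1 + t/‖x - y‖ ≤ (1+t)*(1+‖x - y‖⁻¹) := by
          rw [div_eq_mul_inv]
          nlinarith [inv_pos.2 ha0, ht0, mul_pos ht0 (inv_pos.2 ha0)]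
        calc Real.log (1 + t/‖x - y‖) ≤ Real.log ((1+t)*(1+‖x - y‖⁻¹)) :=
              Real.log_le_log (by positivity) hle
          _ = Real.log (1+t) + Real.log (1+‖x - y‖⁻¹) :=
              Real.log_mul (by positivity) (by positivity)
          _ ≤ Real.log (1+t) + ‖x - y‖⁻¹ := by
              have := Real.log_le_sub_one_of_pos
                (show (0:ℝ) < 1+‖x - y‖⁻¹ by positivity)
              linarith
      rw [h2, h3] at h1'
      linarith
    nlinarith [mul_le_mul_of_nonneg_right key (hf0' y)]
  have hIO : -(Real.log (1+t) * (A/8) + I₀) ≤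
      ∫ y in (Metric.ball (0:E) R)ᶜ, Real.log (‖x - y‖ / ‖y‖) * f y := by
    have hlog1t0 : 0 ≤ Real.log (1+t) := Real.log_nonneg (by linarith)
    have hminor : Integrable
        (fun y : E => -(Real.log (1+t) * f y + f y * ‖x - y‖⁻¹)) :=
      ((hfi.const_mul _).add hI2).neg
    have step1 : (∫ y in (Metric.ball (0:E) R)ᶜ,
          -(Real.log (1+t) * f y + f y * ‖x - y‖⁻¹))
        ≤ ∫ y in (Metric.ball (0:E) R)ᶜ, Real.log (‖x - y‖ / ‖y‖) * f y :=
      MeasureTheory.setIntegral_mono_ae_restrict hminor.integrableOn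
        hGF.integrableOn houter_ae
    have step2 : (∫ y in (Metric.ball (0:E) R)ᶜ,
          -(Real.log (1+t) * f y + f y * ‖x - y‖⁻¹))
        = -(Real.log (1+t) * (∫ y in (Metric.ball (0:E) R)ᶜ, f y)
            + ∫ y in (Metric.ball (0:E) R)ᶜ, f y * ‖x - y‖⁻¹) := by
      rw [MeasureTheory.integral_neg, MeasureTheory.integral_add
        ((hfi.const_mul _).integrableOn) hI2.integrableOn,
        MeasureTheory.integral_const_mul]
    have step3 : (∫ y in (Metric.ball (0:E) R)ᶜ, f y * ‖x - y‖⁻¹) ≤ I₀ := by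
      rw [← hA, ← hK] at hI2b
      calc (∫ y in (Metric.ball (0:E) R)ᶜ, f y * ‖x - y‖⁻¹)
          ≤ ∫ y : E, f y * ‖x - y‖⁻¹ := by
            apply MeasureTheory.setIntegral_le_integral hI2
            filter_upwards with y
            have := hf0' y
            positivity
        _ ≤ I₀ := hI2b
    have step4 : Real.log (1+t) * (∫ y in (Metric.ball (0:E) R)ᶜ, f y)
        ≤ Real.log (1+t) * (A/8) := mul_le_mul_of_nonneg_left houter hlog1t0
    linarith
  -- final combination
  have hlog1t : Real.log (1+t) ≤ Real.log 2 + Real.log t := by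
    have h1 : (1:ℝ) + t ≤ 2*t := by linarith
    have h2 : Real.log (1+t) ≤ Real.log (2*t) := Real.log_le_log (by linarith) h1
    rwa [Real.log_mul two_ne_zero ht0.ne'] at h2
  have h3 : (A/8) * Real.log (1+t) ≤ (A/8) * (Real.log 2 + Real.log t) :=
    mul_le_mul_of_nonneg_left hlog1t (by linarith)
  have h4 : B + Cst + 1 ≤ Real.log t * (3*A/4) :=
    (div_le_iff₀ (by linarith)).mp hlogt
  rw [hsplit]
  rw [hCst] at h4
  nlinarith [hIS, hIO, h3, h4]

lemma sphereVol_pos (k : ℕ) : 0 < sphereVol k := by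
  unfold sphereVol
  apply mul_pos
  · positivity
  · apply ENNReal.toReal_pos
    · exact (measure_ball_pos volume _ one_pos).ne'
    · exact measure_ball_lt_top.ne

lemma gammaConst_pos (m : ℕ) : 0 < gammaConst m := by
  unfold gammaConst
  have h1 := sphereVol_pos (2 * m - 1)
  have h2 : (0:ℝ) < 2 ^ (2 * m - 2) := by positivity
  have h3 : (0:ℝ) < ((m - 1).factorial : ℝ) := by exact_mod_cast (m-1).factorial_pos
  positivity

end AuxLemmas

/-- for `m ≥ 3` and `p(x) = -(1 + x₁²)(x₂² + ⋯ + x_{2m}²)`, there is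
no solution `u` of `(-Δ)^m u = -(2m-1)! e^{2mu}` with `∫ e^{2mu} < ∞` that is
bounded above and satisfies `u - v = p`. -/
theorem no_bddAbove_solution_with_poly_part (m : ℕ) (hm : 3 ≤ m) :
    ¬ ∃ u : EuclideanSpace ℝ (Fin (2 * m)) → ℝ,
      IsSolution m (-((2 * m - 1).factorial : ℝ)) u ∧
      (∃ C : ℝ, ∀ x, u x ≤ C) ∧
      ∀ x : EuclideanSpace ℝ (Fin (2 * m)),
        u x - vAux m u x =
          -(1 + (x ⟨0, by omega⟩) ^ 2) *
            ∑ i ∈ Finset.univ.filter (fun i => i ≠ ⟨0, by omega⟩), (x i) ^ 2 := by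
  rintro ⟨u, ⟨hsm, _heq, hint⟩, ⟨C, hC⟩, hpoly⟩
  have hn : 2 ≤ 2 * m := by omega
  set i0 : Fin (2 * m) := ⟨0, by omega⟩ with hi0
  set f : EuclideanSpace ℝ (Fin (2 * m)) → ℝ :=
    fun y => Real.exp (2 * (m : ℝ) * u y) with hf
  have hfc : Continuous f :=
    Real.continuous_exp.comp (continuous_const.mul (hsm.continuous))
  have hf0 : ∀ y, 0 < f y := fun y => Real.exp_pos _
  have hfM : ∀ y, f y ≤ Real.exp (2 * (m : ℝ) * C) := by
    intro y
    apply Real.exp_le_exp.mpr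
    apply mul_le_mul_of_nonneg_left (hC y) (by positivity)
  set c : ℝ := ((2 * m - 1).factorial : ℝ) / gammaConst m with hc
  have hcpos : 0 < c := by
    apply div_pos _ (gammaConst_pos m)
    exact_mod_cast (2 * m - 1).factorial_pos
  obtain ⟨T, hT⟩ := log_growth hn hfc hf0 hfM hint (C / c)
  set t : ℝ := max T 1 with htdef
  set x : EuclideanSpace ℝ (Fin (2 * m)) := EuclideanSpace.single i0 t with hx
  have hxnorm : ‖x‖ = t := by
    rw [hx, EuclideanSpace.norm_single, Real.norm_eq_abs,
      abs_of_pos (lt_of_lt_of_le one_pos (le_max_right _ _))]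
  obtain ⟨hGF, hlt⟩ := hT x (by rw [hxnorm]; exact le_max_left _ _)
  -- compute vAux at x
  have hvaux : vAux m u x = c * ∫ y, Real.log (‖x - y‖ / ‖y‖) * f y := by
    show -(((2 * m - 1).factorial : ℝ) / gammaConst m) *
        (∫ y, Real.log (‖y‖ / ‖x - y‖) * Real.exp (2 * (m : ℝ) * u y)) = _
    have hflip : (fun y : EuclideanSpace ℝ (Fin (2 * m)) =>
        Real.log (‖y‖ / ‖x - y‖) * Real.exp (2 * (m : ℝ) * u y)) =
        fun y => -(Real.log (‖x - y‖ / ‖y‖) * f y) := by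
      funext y
      rw [hf]
      have : ‖y‖ / ‖x - y‖ = (‖x - y‖ / ‖y‖)⁻¹ := (inv_div _ _).symm
      rw [this, Real.log_inv]
      ring
    rw [hflip, MeasureTheory.integral_neg, ← hc]
    ring
  -- the polynomial part vanishes at x
  have hsum : (∑ i ∈ Finset.univ.filter (fun i => i ≠ i0), (x i) ^ 2) = 0 := by
    apply Finset.sum_eq_zero
    intro i hi
    have hine : i ≠ i0 := (Finset.mem_filter.1 hi).2
    have : x i = 0 := by
      rw [hx, EuclideanSpace.single_apply, if_neg hine]
    rw [this]
    ring
  have hux : u x = vAux m u x := by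
    have := hpoly x
    rw [hsum] at this
    linarith [this]
  have hfinal : C < c * ∫ y, Real.log (‖x - y‖ / ‖y‖) * f y := by
    rw [div_lt_iff₀ hcpos] at hlt
    nlinarith
  rw [← hvaux, ← hux] at hfinal
  exact absurd (hC x) (not_le.mpr hfinal)
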